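/- arXiv:1401.6065 — 2 statements merged into one kernel-verified Lean document; each statement's English description precedes it below -/
import Mathlib

section
/- For any finite Markov chain with transition kernel K and any random mapping representation (g, W) of K with support Λ_W (the minimal set of coordinates that g(·,W) depends on), and any two distributions φ, ψ on the state space, the total variation distance ‖φK − ψK‖_TV is at most the integral over W of ‖φ|_{Λ_W} − ψ|_{Λ_W}‖_TV, where φ|_S denotes the projection (marginal) of φ onto the coordinates in S. -/
/-!
By the random mapping representation, `φK - ψK = ∑_w μW w • (g(·, w))_* (φ - ψ)`, so the triangle
inequality reduces the bound to a single `w`. A map insensitive to each coordinate outside `ΛW w`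
factors through restriction to `ΛW w`; hence `(g(·, w))_* (φ - ψ)` is a pushforward of the
marginal difference `φ|_{ΛW w} - ψ|_{ΛW w}`, and pushforwards do not increase the `ℓ¹` norm.
-/

open Finset Function

section DependsOn

variable {ι : Type*} {α : ι → Type*} {β : Type*} {f : (Π i, α i) → β}

theorem DependsOn.inter {s t : Set ι} (hs : DependsOn f s) (ht : DependsOn f t) :
    DependsOn f (s ∩ t) := by
  classical
  intro x y hxy
  -- `s.piecewise x y` agrees with `x` on `s` and with `y` on `t`.
  calc f x = f (s.piecewise x y) := hs fun i hi => (Set.piecewise_eq_of_mem s x y hi).symm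
    _ = f y := ht fun i hi => by
      by_cases his : i ∈ s
      · rw [Set.piecewise_eq_of_mem s x y his]; exact hxy i ⟨his, hi⟩
      · exact Set.piecewise_eq_of_notMem s x y his

theorem dependsOn_of_forall_notMem [Finite ι] {s : Set ι} (h : ∀ i ∉ s, DependsOn f {i}ᶜ) :
    DependsOn f s := by
  classical
  have hcompl : ∀ t : Finset ι, (t : Set ι) ⊆ sᶜ → DependsOn f (↑t)ᶜ := by
    intro t
    induction t using Finset.induction_on with
    | empty => exact fun _ => by simpa using dependsOn_univ f
    | insert a t _ ih =>
      intro hsub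
      rw [coe_insert, Set.insert_eq, Set.compl_union]
      exact (h a (hsub (mem_insert_self a t))).inter
        (ih ((coe_subset.2 (subset_insert a t)).trans hsub))
  simpa using hcompl sᶜ.toFinite.toFinset (by simp)

end DependsOn

section Pushforward

variable {α β γ : Type*} [Fintype α] [DecidableEq β] [DecidableEq γ]

def pushforward (f : α → β) (μ : α → ℝ) (b : β) : ℝ :=
  ∑ a, if f a = b then μ a else 0

theorem pushforward_sub (f : α → β) (μ ν : α → ℝ) (b : β) :
    pushforward f (μ - ν) b = pushforward f μ b - pushforward f ν b := by
  simp only [pushforward, ← sum_sub_distrib, Pi.sub_apply]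
  exact sum_congr rfl fun a _ => by split_ifs <;> simp

theorem pushforward_comp [Fintype β] (k : β → γ) (f : α → β) (μ : α → ℝ) (c : γ) :
    pushforward (k ∘ f) μ c = pushforward k (pushforward f μ) c := by
  simp only [pushforward, ite_sum_zero, comp_apply]
  rw [sum_comm]
  refine sum_congr rfl fun a _ => ?_
  rw [sum_eq_single (f a) (fun b _ hb => by simp [Ne.symm hb]) (by simp)]
  simp

theorem sum_abs_pushforward_le [Fintype β] (f : α → β) (μ : α → ℝ) :
    ∑ b, |pushforward f μ b| ≤ ∑ a, |μ a| :=
  calc ∑ b, |pushforward f μ b| ≤ ∑ b, ∑ a, |if f a = b then μ a else 0| :=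
        sum_le_sum fun b _ => abs_sum_le_sum_abs _ _
    _ = ∑ a, |μ a| := by
        rw [sum_comm]
        refine sum_congr rfl fun a _ => ?_
        simp_rw [apply_ite abs, abs_zero]
        rw [sum_ite_eq univ (f a), if_pos (mem_univ _)]

theorem sum_abs_pushforward_le_of_factorsThrough [Fintype β] [Fintype γ] {f : α → γ} {r : α → β}
    (hf : f.FactorsThrough r) (μ : α → ℝ) :
    ∑ c, |pushforward f μ c| ≤ ∑ b, |pushforward r μ b| := by
  cases isEmpty_or_nonempty α
  · simp [pushforward]
  · have : Nonempty γ := Nonempty.map f ‹_›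
    obtain ⟨k, rfl⟩ := (factorsThrough_iff f).1 hf
    simp_rw [pushforward_comp]
    exact sum_abs_pushforward_le k _

end Pushforward

theorem sum_mul_eq_sum_pushforward {α ι : Type*} [Fintype α] [Fintype ι] [DecidableEq α]
    {K : α → α → ℝ} {g : α → ι → α} {μW : ι → ℝ}
    (hrep : ∀ x y, ∑ w, (if g x w = y then μW w else 0) = K x y) (φ : α → ℝ) (y : α) :
    ∑ x, φ x * K x y = ∑ w, μW w * pushforward (g · w) φ y := by
  simp_rw [← hrep, pushforward, mul_sum, mul_ite, mul_zero]
  rw [sum_comm]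
  exact sum_congr rfl fun w _ => sum_congr rfl fun x _ => by rw [mul_comm]

theorem stmt_0_general {Spin Λ ι : Type*} [Fintype Spin] [Fintype Λ] [Fintype ι]
    [DecidableEq Spin] [DecidableEq Λ]
    (K : (Λ → Spin) → (Λ → Spin) → ℝ)
    (g : (Λ → Spin) → ι → (Λ → Spin))
    (μW : ι → ℝ) (hμW0 : ∀ w, 0 ≤ μW w)
    (hrep : ∀ x y, ∑ w, (if g x w = y then μW w else 0) = K x y)
    (ΛW : ι → Finset Λ)
    (hΛW : ∀ w v, v ∈ ΛW w ↔
      ∃ x x' : Λ → Spin, (∀ u, u ≠ v → x u = x' u) ∧ g x w ≠ g x' w)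
    (φ ψ : (Λ → Spin) → ℝ) :
    (1 / 2) * ∑ y, |(∑ x, φ x * K x y) - (∑ x, ψ x * K x y)| ≤
      ∑ w, μW w * ((1 / 2) * ∑ z : {v // v ∈ ΛW w} → Spin,
        |(∑ x, if (∀ v : {v // v ∈ ΛW w}, x v.1 = z v) then φ x else 0) -
          (∑ x, if (∀ v : {v // v ∈ ΛW w}, x v.1 = z v) then ψ x else 0)|) := by
  have hdep (w : ι) : DependsOn (g · w) (ΛW w) :=
    dependsOn_of_forall_notMem fun v hv x x' hxx' =>
      by_contra fun hne => hv ((hΛW w v).2 ⟨x, x', hxx', hne⟩)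
  have hfac (w : ι) : (g · w).FactorsThrough (ΛW w).restrict :=
    fun x x' h => hdep w fun v hv => congrFun h ⟨v, hv⟩
  have hmarg (w : ι) (μ : (Λ → Spin) → ℝ) (z : {v // v ∈ ΛW w} → Spin) :
      (∑ x, if (∀ v : {v // v ∈ ΛW w}, x v.1 = z v) then μ x else 0) =
        pushforward (ΛW w).restrict μ z := by
    simp only [pushforward, funext_iff, Finset.restrict]
  simp_rw [hmarg, sum_mul_eq_sum_pushforward hrep, ← sum_sub_distrib, ← mul_sub,
    ← pushforward_sub]
  calc (1 / 2) * ∑ y, |∑ w, μW w * pushforward (g · w) (φ - ψ) y|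
      ≤ (1 / 2) * ∑ y, ∑ w, μW w * |pushforward (g · w) (φ - ψ) y| := by
        gcongr with y
        refine (abs_sum_le_sum_abs _ _).trans_eq (sum_congr rfl fun w _ => ?_)
        rw [abs_mul, abs_of_nonneg (hμW0 w)]
    _ = ∑ w, μW w * ((1 / 2) * ∑ y, |pushforward (g · w) (φ - ψ) y|) := by
        rw [sum_comm, mul_sum]
        refine sum_congr rfl fun w _ => ?_
        rw [← mul_sum]
        ring
    _ ≤ _ := by
        gcongr with w
        · exact hμW0 w
        · exact sum_abs_pushforward_le_of_factorsThrough (hfac w) _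

/-- Support lemma for random mapping representations: if `K` is a Markov kernel on
`Λ → Spin` with random mapping representation `(g, W)` (where `W` ranges over a finite
index type `ι` with probability weights `μW`), and `ΛW w` is the support of `g (·, w)`
(the set of coordinates it depends on), then for any two distributions `φ, ψ`,
`‖φK − ψK‖_TV ≤ ∑_w μW w · ‖φ|_{ΛW w} − ψ|_{ΛW w}‖_TV`,
where `φ|_S` denotes the marginal of `φ` on the coordinates in `S`. -/
theorem stmt_0 {Spin Λ ι : Type*} [Fintype Spin] [Fintype Λ] [Fintype ι]
    [DecidableEq Spin] [DecidableEq Λ]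
    (K : (Λ → Spin) → (Λ → Spin) → ℝ)
    (g : (Λ → Spin) → ι → (Λ → Spin))
    (μW : ι → ℝ) (hμW0 : ∀ w, 0 ≤ μW w) (hμW1 : ∑ w, μW w = 1)
    (hrep : ∀ x y, ∑ w, (if g x w = y then μW w else 0) = K x y)
    (ΛW : ι → Finset Λ)
    (hΛW : ∀ w v, v ∈ ΛW w ↔
      ∃ x x' : Λ → Spin, (∀ u, u ≠ v → x u = x' u) ∧ g x w ≠ g x' w)
    (φ ψ : (Λ → Spin) → ℝ)
    (hφ0 : ∀ x, 0 ≤ φ x) (hφ1 : ∑ x, φ x = 1)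
    (hψ0 : ∀ x, 0 ≤ ψ x) (hψ1 : ∑ x, ψ x = 1) :
    (1 / 2) * ∑ y, |(∑ x, φ x * K x y) - (∑ x, ψ x * K x y)| ≤
      ∑ w, μW w * ((1 / 2) * ∑ z : {v // v ∈ ΛW w} → Spin,
        |(∑ x, if (∀ v : {v // v ∈ ΛW w}, x v.1 = z v) then φ x else 0) -
          (∑ x, if (∀ v : {v // v ∈ ΛW w}, x v.1 = z v) then ψ x else 0)|) :=
  stmt_0_general K g μW hμW0 hrep ΛW hΛW φ ψ
end

section
/- Let {Λ_i : i ∈ I} be a finite partition of a finite set Λ, and for each i let ν_i be a probability measure on {±1}^{Λ_i}; set ν = ∏_i ν_i. Let μ be the measure on {±1}^Λ obtained by: sampling S ⊂ I from a measure μ̃, sampling the spins on ∪_{i∈S} Λ_i from an arbitrary measure φ_S, and sampling the spins on each Λ_i with i ∉ S independently from ν_i. Then the squared L²(ν)-distance ‖μ − ν‖²_{L²(ν)} = Σ_x (μ(x)−ν(x))²/ν(x) is at most [Σ_{S,S'} μ̃(S) μ̃(S') ∏_{i ∈ S∩S'} (min_{x_i ∈ {±1}^{Λ_i}} ν_i(x_i))^{-1}]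 − 1, where S, S' range over subsets of I. -/
/-!
Expanding the square gives `∑ (μ - ν)² / ν = ∑ μ² / ν - 1`, and `μ² / ν` splits into cross terms
indexed by pairs `(S, S')`. In the `(S, S')` term the factors `ν_i` with `i ∉ S ∪ S'` survive, those
with `i` in exactly one of `S, S'` cancel, and those with `i ∈ S ∩ S'` appear inverted, so they are
at most `(min ν_i)⁻¹`. What is left, `∑ φ_S φ_{S'} ∏_{i ∉ S ∪ S'} ν_i`, is the probability that
independent samples of `φ_S` and `φ_{S'}` agree on `S ∩ S'`, hence at most `1`.
-/

open Finset

theorem sum_comp_le_sum_of_injective {α β : Type*} [Fintype α] [Fintype β] {e : α → β}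
    (he : Function.Injective e) {f : β → ℝ} (hf : ∀ b, 0 ≤ f b) :
    ∑ a, f (e a) ≤ ∑ b, f b := by
  classical
  rw [← Finset.sum_image fun a _ b _ h => he h]
  exact sum_le_univ_sum_of_nonneg hf

theorem sum_sq_sub_div_eq {α : Type*} [Fintype α] (p q : α → ℝ) (hq : ∀ a, 0 < q a)
    (hp1 : ∑ a, p a = 1) (hq1 : ∑ a, q a = 1) :
    ∑ a, (p a - q a) ^ 2 / q a = ∑ a, p a ^ 2 / q a - 1 := by
  have expand : ∀ a, (p a - q a) ^ 2 / q a = p a ^ 2 / q a - 2 * p a + q a := fun a => by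
    field_simp [(hq a).ne']
    ring
  simp only [expand, sum_add_distrib, sum_sub_distrib, ← mul_sum, hp1, hq1]
  ring

theorem inv_le_inv_ciInf {ι : Type*} [Finite ι] {x : ι → ℝ} (hx : ∀ i, 0 < x i) (j : ι) :
    (x j)⁻¹ ≤ (⨅ i, x i)⁻¹ := by
  have : Nonempty ι := ⟨j⟩
  obtain ⟨k, hk⟩ := exists_eq_ciInf_of_finite (f := x)
  exact inv_anti₀ (hk ▸ hx k) (ciInf_le (Finite.bddBelow_range x) j)

theorem prod_compl_mul_prod_compl_div_prod {ι K : Type*} [Fintype ι] [DecidableEq ι] [Field K]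
    (S S' : Finset ι) {x : ι → K} (hx : ∀ i, x i ≠ 0) :
    (∏ i ∈ Sᶜ, x i) * (∏ i ∈ S'ᶜ, x i) / ∏ i, x i
      = (∏ i ∈ (S ∪ S')ᶜ, x i) * ∏ i ∈ S ∩ S', (x i)⁻¹ := by
  have hne : ∀ s : Finset ι, ∏ i ∈ s, x i ≠ 0 := fun s => prod_ne_zero_iff.mpr fun i _ => hx i
  rw [← prod_union_inter, ← compl_inter, ← compl_union, ← prod_mul_prod_compl (S ∩ S'),
    prod_inv_distrib]
  field_simp [hne]

section
variable {I : Type*} [Fintype I] [DecidableEq I] {D : I → Type*} [∀ i, Fintype (D i)]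

theorem sum_restrict_mul_prod_compl (S : Finset I) (Φ : (∀ i : S, D i) → ℝ)
    (ν : ∀ i, D i → ℝ) (hν1 : ∀ i, ∑ d, ν i d = 1) :
    ∑ g : ∀ i, D i, Φ (S.restrict g) * ∏ i ∈ Sᶜ, ν i (g i) = ∑ a, Φ a := by
  calc ∑ g : ∀ i, D i, Φ (S.restrict g) * ∏ i ∈ Sᶜ, ν i (g i)
      = ∑ g : ∀ i, D i, Φ (S.restrict g) * ∏ j : {i // i ∉ S}, ν j (g j) := by
        simp only [prod_subtype Sᶜ (fun _ => mem_compl)]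
    _ = ∑ p : (∀ i : S, D i) × (∀ j : {i // i ∉ S}, D j), Φ p.1 * ∏ j, ν j.1 (p.2 j) :=
        Equiv.sum_comp (Equiv.piEquivPiSubtypeProd (· ∈ S) D) fun p => Φ p.1 * ∏ j, ν j.1 (p.2 j)
    _ = ∑ a, Φ a := by
        simp only [Fintype.sum_prod_type, ← mul_sum, ← Fintype.prod_sum, hν1, prod_const_one,
          mul_one]

theorem sum_restrict_mul_restrict_mul_prod_compl_union_le (S S' : Finset I)
    {Φ : (∀ i : S, D i) → ℝ} {Φ' : (∀ i : S', D i) → ℝ} (hΦ : ∀ a, 0 ≤ Φ a)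
    (hΦ' : ∀ b, 0 ≤ Φ' b) {ν : ∀ i, D i → ℝ} (hν0 : ∀ i d, 0 ≤ ν i d)
    (hν1 : ∀ i, ∑ d, ν i d = 1) :
    ∑ g : ∀ i, D i, Φ (S.restrict g) * Φ' (S'.restrict g) * ∏ i ∈ (S ∪ S')ᶜ, ν i (g i)
      ≤ (∑ a, Φ a) * ∑ b, Φ' b := by
  set T := (S ∪ S')ᶜ
  -- Only pairs of configurations on `S` and `S'` that agree on `S ∩ S'` are counted.
  have hinj :
      Function.Injective fun g : ∀ i, D i => (S.restrict g, S'.restrict g, T.restrict g) := by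
    intro g g' h
    simp only [Prod.mk.injEq] at h
    obtain ⟨hS, hS', hT⟩ := h
    funext i
    by_cases hi : i ∈ S
    · exact congrFun hS ⟨i, hi⟩
    by_cases hi' : i ∈ S'
    · exact congrFun hS' ⟨i, hi'⟩
    · exact congrFun hT ⟨i, by simp [T, hi, hi']⟩
  let F : (∀ i : S, D i) × (∀ i : S', D i) × (∀ i : T, D i) → ℝ :=
    fun p => Φ p.1 * Φ' p.2.1 * ∏ j, ν j.1 (p.2.2 j)
  calc ∑ g : ∀ i, D i, Φ (S.restrict g) * Φ' (S'.restrict g) * ∏ i ∈ T, ν i (g i)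
      = ∑ g : ∀ i, D i, F (S.restrict g, S'.restrict g, T.restrict g) := by
        simp only [F, ← prod_coe_sort T]
        rfl
    _ ≤ ∑ p, F p := sum_comp_le_sum_of_injective hinj fun p =>
        mul_nonneg (mul_nonneg (hΦ _) (hΦ' _)) (prod_nonneg fun j _ => hν0 j _)
    _ = (∑ a, Φ a) * ∑ b, Φ' b := by
        simp only [F, Fintype.sum_prod_type, ← mul_sum, ← sum_mul, ← Fintype.prod_sum, hν1,
          prod_const_one, mul_one]

def productDensity (ν : ∀ i, D i → ℝ) (g : ∀ i, D i) : ℝ := ∏ i, ν i (g i)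

def mixtureDensity (μt : Finset I → ℝ) (Φ : ∀ S : Finset I, (∀ i : S, D i) → ℝ)
    (ν : ∀ i, D i → ℝ) (g : ∀ i, D i) : ℝ :=
  ∑ S, μt S * Φ S (S.restrict g) * ∏ i ∈ Sᶜ, ν i (g i)

theorem sum_productDensity {ν : ∀ i, D i → ℝ} (hν1 : ∀ i, ∑ d, ν i d = 1) :
    ∑ g, productDensity ν g = 1 := by
  simp only [productDensity, ← Fintype.prod_sum, hν1, prod_const_one]

theorem sum_mixtureDensity {μt : Finset I → ℝ} (hμt1 : ∑ S, μt S = 1)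
    {Φ : ∀ S : Finset I, (∀ i : S, D i) → ℝ} (hΦ1 : ∀ S, ∑ a, Φ S a = 1)
    {ν : ∀ i, D i → ℝ} (hν1 : ∀ i, ∑ d, ν i d = 1) :
    ∑ g, mixtureDensity μt Φ ν g = 1 := by
  simp only [mixtureDensity, mul_assoc]
  rw [sum_comm]
  simp only [← mul_sum, sum_restrict_mul_prod_compl _ _ _ hν1, hΦ1, mul_one, hμt1]

theorem mul_mul_div_productDensity_le {ν : ∀ i, D i → ℝ} (hν : ∀ i d, 0 < ν i d)
    (S S' : Finset I) {a b : ℝ} (ha : 0 ≤ a) (hb : 0 ≤ b) (g : ∀ i, D i) :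
    (a * ∏ i ∈ Sᶜ, ν i (g i)) * (b * ∏ i ∈ S'ᶜ, ν i (g i)) / productDensity ν g
      ≤ (∏ i ∈ S ∩ S', (⨅ d, ν i d)⁻¹) * (a * b * ∏ i ∈ (S ∪ S')ᶜ, ν i (g i)) := by
  have hratio := prod_compl_mul_prod_compl_div_prod S S' fun i => (hν i (g i)).ne'
  have hinv : ∏ i ∈ S ∩ S', (ν i (g i))⁻¹ ≤ ∏ i ∈ S ∩ S', (⨅ d, ν i d)⁻¹ :=
    prod_le_prod (fun i _ => (inv_pos.mpr (hν i _)).le) fun i _ => inv_le_inv_ciInf (hν i) _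
  calc (a * ∏ i ∈ Sᶜ, ν i (g i)) * (b * ∏ i ∈ S'ᶜ, ν i (g i)) / productDensity ν g
      = (a * b * ∏ i ∈ (S ∪ S')ᶜ, ν i (g i)) * ∏ i ∈ S ∩ S', (ν i (g i))⁻¹ := by
        rw [productDensity, mul_mul_mul_comm, mul_div_assoc, hratio]
        ring
    _ ≤ _ := by
        rw [mul_comm]
        exact mul_le_mul_of_nonneg_right hinv
          (mul_nonneg (mul_nonneg ha hb) (prod_nonneg fun i _ => (hν i _).le))

theorem sum_mixtureDensity_sq_div_le {μt : Finset I → ℝ} (hμt0 : ∀ S, 0 ≤ μt S)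
    {Φ : ∀ S : Finset I, (∀ i : S, D i) → ℝ} (hΦ0 : ∀ S a, 0 ≤ Φ S a)
    (hΦ1 : ∀ S, ∑ a, Φ S a = 1)
    {ν : ∀ i, D i → ℝ} (hν : ∀ i d, 0 < ν i d) (hν1 : ∀ i, ∑ d, ν i d = 1) :
    ∑ g, mixtureDensity μt Φ ν g ^ 2 / productDensity ν g
      ≤ ∑ S, ∑ S', μt S * μt S' * ∏ i ∈ S ∩ S', (⨅ d, ν i d)⁻¹ := by
  set M : Finset I → ℝ := fun T => ∏ i ∈ T, (⨅ d, ν i d)⁻¹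
  have hM : ∀ T, 0 ≤ M T := fun T => prod_nonneg fun i _ =>
    inv_nonneg.mpr (Real.iInf_nonneg fun d => (hν i d).le)
  calc ∑ g, mixtureDensity μt Φ ν g ^ 2 / productDensity ν g
      = ∑ S, ∑ S', μt S * μt S' * ∑ g, (Φ S (S.restrict g) * ∏ i ∈ Sᶜ, ν i (g i)) *
          (Φ S' (S'.restrict g) * ∏ i ∈ S'ᶜ, ν i (g i)) / productDensity ν g := by
        have expand : ∀ g, mixtureDensity μt Φ ν g ^ 2 / productDensity ν g
            = ∑ S, ∑ S', μt S * μt S' * ((Φ S (S.restrict g) * ∏ i ∈ Sᶜ, ν i (g i)) *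
              (Φ S' (S'.restrict g) * ∏ i ∈ S'ᶜ, ν i (g i)) / productDensity ν g) := fun g => by
          rw [sq, mixtureDensity, sum_mul_sum, sum_div]
          exact sum_congr rfl fun S _ => by rw [sum_div]; exact sum_congr rfl fun S' _ => by ring
        simp only [expand, mul_sum]
        rw [sum_comm]
        exact sum_congr rfl fun S _ => sum_comm
    _ ≤ ∑ S, ∑ S', μt S * μt S' * (M (S ∩ S') * ∑ g,
          Φ S (S.restrict g) * Φ S' (S'.restrict g) * ∏ i ∈ (S ∪ S')ᶜ, ν i (g i)) := by
        gcongr with S _ S' _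
        · exact mul_nonneg (hμt0 S) (hμt0 S')
        rw [mul_sum]
        gcongr with g
        exact mul_mul_div_productDensity_le hν S S' (hΦ0 _ _) (hΦ0 _ _) g
    _ ≤ ∑ S, ∑ S', μt S * μt S' * M (S ∩ S') := by
        gcongr with S _ S' _
        · exact mul_nonneg (hμt0 S) (hμt0 S')
        refine mul_le_of_le_one_right (hM _) ?_
        calc _ ≤ (∑ a, Φ S a) * ∑ b, Φ S' b :=
              sum_restrict_mul_restrict_mul_prod_compl_union_le S S' (hΦ0 S) (hΦ0 S')
                (fun i d => (hν i d).le) hν1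
          _ = 1 := by rw [hΦ1, hΦ1, one_mul]

theorem sum_sq_sub_div_productDensity_le {μt : Finset I → ℝ} (hμt0 : ∀ S, 0 ≤ μt S)
    (hμt1 : ∑ S, μt S = 1)
    {Φ : ∀ S : Finset I, (∀ i : S, D i) → ℝ} (hΦ0 : ∀ S a, 0 ≤ Φ S a)
    (hΦ1 : ∀ S, ∑ a, Φ S a = 1)
    {ν : ∀ i, D i → ℝ} (hν : ∀ i d, 0 < ν i d) (hν1 : ∀ i, ∑ d, ν i d = 1) :
    ∑ g, (mixtureDensity μt Φ ν g - productDensity ν g) ^ 2 / productDensity ν g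
      ≤ ∑ S, ∑ S', μt S * μt S' * ∏ i ∈ S ∩ S', (⨅ d, ν i d)⁻¹ - 1 := by
  rw [sum_sq_sub_div_eq (mixtureDensity μt Φ ν) (productDensity ν)
    (fun g => prod_pos fun i _ => hν i (g i)) (sum_mixtureDensity hμt1 hΦ1 hν1)
    (sum_productDensity hν1)]
  exact sub_le_sub_right (sum_mixtureDensity_sq_div_le hμt0 hΦ0 hΦ1 hν hν1) 1

end

def arrowEquivPiOfSigmaEquiv {ι X β : Type*} {F : ι → Type*} (e : (Σ i, F i) ≃ X) :
    (X → β) ≃ ∀ i, F i → β :=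
  (e.symm.arrowCongr (Equiv.refl β)).trans (Equiv.piCurry fun _ _ => β)

def fiberArrowEquiv {Λ I β : Type*} (part : Λ → I) :
    (Λ → β) ≃ ∀ i, ({v // part v = i} → β) :=
  arrowEquivPiOfSigmaEquiv (Equiv.sigmaFiberEquiv part)

def subtypeFiberArrowEquiv {Λ I β : Type*} (part : Λ → I) (S : Finset I) :
    ({v // part v ∈ S} → β) ≃ ∀ i : S, ({v // part v = i} → β) :=
  arrowEquivPiOfSigmaEquiv (Equiv.sigmaSubtypeFiberEquivSubtype part fun _ => Iff.rfl)

/-- Miller–Peres type L² lemma: if `μ` is built by sampling a subset `S` of the parts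
(via `μ̃`), using an arbitrary law `φ S` on the parts in `S` and independent laws `ν i`
on the remaining parts, then `‖μ − ν‖²_{L²(ν)}` is bounded by
`∑_{S,S'} μ̃(S)μ̃(S') ∏_{i ∈ S ∩ S'} (min_{x_i} ν_i(x_i))⁻¹ − 1`. -/
theorem stmt_1 {Λ I : Type*} [Fintype Λ] [Fintype I] [DecidableEq I] [DecidableEq Λ]
    (part : Λ → I)
    (ν : ∀ i : I, ({v : Λ // part v = i} → Bool) → ℝ)
    (hνpos : ∀ i xi, 0 < ν i xi) (hν1 : ∀ i, ∑ xi, ν i xi = 1)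
    (μt : Finset I → ℝ) (hμt0 : ∀ S, 0 ≤ μt S) (hμt1 : ∑ S : Finset I, μt S = 1)
    (φ : ∀ S : Finset I, ({v : Λ // part v ∈ S} → Bool) → ℝ)
    (hφ0 : ∀ S y, 0 ≤ φ S y) (hφ1 : ∀ S, ∑ y, φ S y = 1)
    (μ : (Λ → Bool) → ℝ)
    (hμ : ∀ x, μ x = ∑ S : Finset I,
      μt S * φ S (fun v => x v.1) * ∏ i ∈ Sᶜ, ν i (fun v => x v.1))
    (νtot : (Λ → Bool) → ℝ)
    (hνtot : ∀ x, νtot x = ∏ i, ν i (fun v => x v.1)) :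
    ∑ x, (μ x - νtot x) ^ 2 / νtot x ≤
      (∑ S : Finset I, ∑ S' : Finset I,
        μt S * μt S' * ∏ i ∈ S ∩ S', (⨅ xi : {v : Λ // part v = i} → Bool, ν i xi)⁻¹) - 1 := by
  let Φ S := φ S ∘ (subtypeFiberArrowEquiv part S).symm
  have bound := sum_sq_sub_div_productDensity_le hμt0 hμt1 (Φ := Φ) (fun S a => hφ0 S _)
    (fun S => (Equiv.sum_comp _ (φ S)).trans (hφ1 S)) hνpos hν1
  rw [← Equiv.sum_comp (fiberArrowEquiv part)] at bound
  have hrestrict : ∀ (x : Λ → Bool) S, (subtypeFiberArrowEquiv part S).symm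
      (S.restrict (fiberArrowEquiv part x)) = fun v => x v.1 :=
    fun x S => (Equiv.symm_apply_eq _).mpr rfl
  refine le_of_eq_of_le (sum_congr rfl fun x _ => ?_) bound
  simp only [hμ, hνtot, mixtureDensity, productDensity, Φ, Function.comp_apply, hrestrict]
  rfl
end
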